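/- For all vectors x = (x₁,x₂,x₃) and y = (y₁,y₂,y₃) in ℝ³, exp(−‖x−y‖²/2) = Σ_{(l,m,n)∈ℕ³} Σ_{(l',m',n')∈ℕ³} Λ_{lmn}(y) · Λ_{l'm'n'}(x) · (−1)^{l'+m'+n'} · He_{l+l'}(0) · He_{m+m'}(0) · He_{n+n'}(0), where both families are (absolutely) summable, so the double sum may be taken in either order. (Fully factored Vandermonde form of the Gaussian RBF kernel.) -/

import Mathlib

/-!
Along each coordinate the terms are `He_{l+l'}(0) yᵢ^l (-xᵢ)^{l'} / (l! l'!)`, and by the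
binomial theorem their sum over the antidiagonal `l + l' = n` is `He_n(0) (yᵢ - xᵢ)^n / n!`.
Since `He_n(0)` vanishes for odd `n` and `He_{2k}(0) / (2k)! = (-1/2)^k / k!`, these are the
Taylor coefficients of `exp (-t²/2)` at `t = yᵢ - xᵢ`; the same computation with `|He_n(0)|`
bounds the absolute series by `exp ((|yᵢ| + |xᵢ|)² / 2)`. The three-dimensional family is the
product of three such absolutely summable one-dimensional families.
-/

/-- Probabilists' Hermite polynomials evaluated over ℝ. -/
noncomputable def He (n : ℕ) (x : ℝ) : ℝ := Polynomial.aeval x (Polynomial.hermite n)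

/-- Geometric moments `Λ_{lmn}(x) = x₁^l x₂^m x₃^n / (l! m! n!)` on `ℝ³`. -/
noncomputable def geomMoment (p : ℕ × ℕ × ℕ) (x : EuclideanSpace ℝ (Fin 3)) : ℝ :=
  x 0 ^ p.1 * x 1 ^ p.2.1 * x 2 ^ p.2.2 /
    ((p.1.factorial : ℝ) * (p.2.1.factorial : ℝ) * (p.2.2.factorial : ℝ))

open Finset
open scoped Nat

theorem HasSum.of_even_of_odd_eq_zero {α : Type*} [AddCommMonoid α] [TopologicalSpace α]
    [ContinuousAdd α] {f : ℕ → α} {a : α} (he : HasSum (fun k => f (2 * k)) a)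
    (ho : ∀ k, f (2 * k + 1) = 0) : HasSum f a := by
  have hodd : HasSum (fun k => f (2 * k + 1)) 0 := by simpa only [ho] using hasSum_zero
  simpa using he.even_add_odd hodd

section Antidiagonal

variable {A : Type*} [AddCommMonoid A] [HasAntidiagonal A]

theorem summable_of_summable_sum_antidiagonal_of_nonneg {f : A × A → ℝ} (hf : 0 ≤ f)
    (h : Summable fun n => ∑ p ∈ antidiagonal n, f p) : Summable f := by
  refine HasAntidiagonal.sigmaAntidiagonalEquivProd.summable_iff.1
    ((summable_sigma_of_nonneg fun _ => hf _).2 ⟨fun _ => .of_finite, ?_⟩)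
  simpa only [Function.comp_apply, HasAntidiagonal.sigmaAntidiagonalEquivProd_apply,
    Finset.tsum_subtype] using h

theorem HasSum.of_sum_antidiagonal {α : Type*} [AddCommMonoid α] [TopologicalSpace α]
    [ContinuousAdd α] [T3Space α] {f : A × A → α} {s : α} (hf : Summable f)
    (h : HasSum (fun n => ∑ p ∈ antidiagonal n, f p) s) : HasSum f s := by
  obtain ⟨t, ht⟩ := hf
  have hfib := (HasAntidiagonal.sigmaAntidiagonalEquivProd.hasSum_iff.2 ht).sigma
    fun n => (antidiagonal n).hasSum f
  rwa [h.unique hfib]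

end Antidiagonal

theorem sum_antidiagonal_pow_div_factorial {K : Type*} [Field K] [CharZero K] (a b : K) (n : ℕ) :
    ∑ p ∈ antidiagonal n, a ^ p.1 / p.1 ! * (b ^ p.2 / p.2 !) = (a + b) ^ n / n ! := by
  rw [(Commute.all a b).add_pow', sum_div]
  refine sum_congr rfl fun p hp => ?_
  rw [← mem_antidiagonal.mp hp, nsmul_eq_mul, Nat.cast_add_choose]
  have := (p.1 + p.2).factorial_ne_zero
  field_simp

theorem summable_norm_prod_mul_pow_div_factorial {c : ℕ → ℝ} {a b : ℝ}
    (hc : Summable fun n => ‖c n‖ * (‖a‖ + ‖b‖) ^ n / n !) :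
    Summable fun p : ℕ × ℕ => ‖c (p.1 + p.2) * (a ^ p.1 / p.1 ! * (b ^ p.2 / p.2 !))‖ := by
  refine summable_of_summable_sum_antidiagonal_of_nonneg (fun _ => norm_nonneg _) ?_
  refine hc.congr fun n => ?_
  rw [mul_div_assoc, ← sum_antidiagonal_pow_div_factorial, mul_sum]
  refine sum_congr rfl fun p hp => ?_
  simp [mem_antidiagonal.mp hp, norm_mul, norm_div, norm_pow]

theorem hasSum_prod_mul_pow_div_factorial {c : ℕ → ℝ} {a b s : ℝ}
    (hc : Summable fun n => ‖c n‖ * (‖a‖ + ‖b‖) ^ n / n !)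
    (h : HasSum (fun n => c n * (a + b) ^ n / n !) s) :
    HasSum (fun p : ℕ × ℕ => c (p.1 + p.2) * (a ^ p.1 / p.1 ! * (b ^ p.2 / p.2 !))) s := by
  refine .of_sum_antidiagonal (summable_norm_prod_mul_pow_div_factorial hc).of_norm (h.congr_fun ?_)
  intro n
  rw [mul_div_assoc, ← sum_antidiagonal_pow_div_factorial, mul_sum]
  exact sum_congr rfl fun p hp => by rw [mem_antidiagonal.mp hp]

theorem He_apply_zero_of_odd {n : ℕ} (hn : Odd n) : He n 0 = 0 := by
  simp [He, Polynomial.aeval_def, Polynomial.eval₂_at_zero,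
    Polynomial.coeff_hermite_of_odd_add (n := n) (k := 0) (by simpa using hn)]

theorem Nat.factorial_two_mul (k : ℕ) : (2 * k)! = 2 ^ k * k ! * (2 * k - 1)‼ := by
  cases k with
  | zero => rfl
  | succ k =>
    rw [show 2 * (k + 1) = 2 * k + 1 + 1 by ring, Nat.factorial_eq_mul_doubleFactorial,
      show 2 * k + 1 + 1 = 2 * (k + 1) by ring, Nat.doubleFactorial_two_mul,
      show 2 * (k + 1) - 1 = 2 * k + 1 by omega]

theorem He_two_mul_apply_zero_div_factorial (k : ℕ) :
    He (2 * k) 0 / (2 * k)! = (-2⁻¹) ^ k / k ! := by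
  have hcoeff := Polynomial.coeff_hermite_explicit k 0
  simp only [add_zero, Nat.choose_zero_right, Nat.cast_one, mul_one] at hcoeff
  simp only [He, Polynomial.aeval_def, Polynomial.eval₂_at_zero, hcoeff, Nat.factorial_two_mul]
  have := (2 * k - 1).doubleFactorial_pos.ne'
  push_cast
  field_simp
  rw [← mul_pow]
  norm_num

theorem norm_He_two_mul_apply_zero_div_factorial (k : ℕ) :
    ‖He (2 * k) 0‖ / (2 * k)! = 2⁻¹ ^ k / k ! := by
  simpa [norm_div] using congrArg norm (He_two_mul_apply_zero_div_factorial k)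

theorem Real.hasSum_pow_div_factorial (u : ℝ) : HasSum (fun n => u ^ n / n !) (Real.exp u) := by
  rw [Real.exp_eq_exp_ℝ]
  exact NormedSpace.expSeries_div_hasSum_exp u

theorem hasSum_He_apply_zero_mul_pow_div_factorial (t : ℝ) :
    HasSum (fun n => He n 0 * t ^ n / n !) (Real.exp (-t ^ 2 / 2)) := by
  refine .of_even_of_odd_eq_zero ?_ fun k => by simp [He_apply_zero_of_odd (odd_two_mul_add_one k)]
  refine (Real.hasSum_pow_div_factorial _).congr_fun fun k => ?_
  rw [mul_div_right_comm, He_two_mul_apply_zero_div_factorial]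
  ring

theorem hasSum_norm_He_apply_zero_mul_pow_div_factorial (t : ℝ) :
    HasSum (fun n => ‖He n 0‖ * t ^ n / n !) (Real.exp (t ^ 2 / 2)) := by
  refine .of_even_of_odd_eq_zero ?_ fun k => by simp [He_apply_zero_of_odd (odd_two_mul_add_one k)]
  refine (Real.hasSum_pow_div_factorial _).congr_fun fun k => ?_
  rw [mul_div_right_comm, norm_He_two_mul_apply_zero_div_factorial]
  ring

noncomputable def gaussKernelTerm (a b : ℝ) (p : ℕ × ℕ) : ℝ :=
  He (p.1 + p.2) 0 * (a ^ p.1 / p.1 ! * ((-b) ^ p.2 / p.2 !))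

theorem summable_norm_gaussKernelTerm (a b : ℝ) :
    Summable fun p => ‖gaussKernelTerm a b p‖ :=
  summable_norm_prod_mul_pow_div_factorial (c := fun n => He n 0)
    (hasSum_norm_He_apply_zero_mul_pow_div_factorial (‖a‖ + ‖-b‖)).summable

theorem hasSum_gaussKernelTerm (a b : ℝ) :
    HasSum (gaussKernelTerm a b) (Real.exp (-(a - b) ^ 2 / 2)) := by
  rw [sub_eq_add_neg]
  exact hasSum_prod_mul_pow_div_factorial (c := fun n => He n 0)
    (hasSum_norm_He_apply_zero_mul_pow_div_factorial (‖a‖ + ‖-b‖)).summable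
    (hasSum_He_apply_zero_mul_pow_div_factorial (a + -b))

theorem geomMoment_mul_He_eq_prod_gaussKernelTerm
    (x y : EuclideanSpace ℝ (Fin 3)) (l l' m m' n n' : ℕ) :
    geomMoment (l, m, n) y * geomMoment (l', m', n') x * (-1 : ℝ) ^ (l' + m' + n') *
        He (l + l') 0 * He (m + m') 0 * He (n + n') 0 =
      gaussKernelTerm (y 0) (x 0) (l, l') *
        (gaussKernelTerm (y 1) (x 1) (m, m') * gaussKernelTerm (y 2) (x 2) (n, n')) := by
  simp only [gaussKernelTerm, geomMoment]
  ring

/-- Fully factored Vandermonde form of the Gaussian RBF kernel on `ℝ³`: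
`exp (-‖x-y‖²/2)` equals the (absolutely summable) double sum over
`(l,m,n), (l',m',n') ∈ ℕ³` of
`Λ_{lmn}(y) Λ_{l'm'n'}(x) (-1)^{l'+m'+n'} He_{l+l'}(0) He_{m+m'}(0) He_{n+n'}(0)`,
so the double sum may be taken in either order. -/
theorem gaussian_kernel_fully_factored (x y : EuclideanSpace ℝ (Fin 3)) :
    Summable (fun q : (ℕ × ℕ × ℕ) × (ℕ × ℕ × ℕ) =>
      |geomMoment q.1 y * geomMoment q.2 x * (-1 : ℝ) ^ (q.2.1 + q.2.2.1 + q.2.2.2) *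
        He (q.1.1 + q.2.1) 0 * He (q.1.2.1 + q.2.2.1) 0 * He (q.1.2.2 + q.2.2.2) 0|) ∧
    HasSum (fun q : (ℕ × ℕ × ℕ) × (ℕ × ℕ × ℕ) =>
        geomMoment q.1 y * geomMoment q.2 x * (-1 : ℝ) ^ (q.2.1 + q.2.2.1 + q.2.2.2) *
          He (q.1.1 + q.2.1) 0 * He (q.1.2.1 + q.2.2.1) 0 * He (q.1.2.2 + q.2.2.2) 0)
      (Real.exp (-‖x - y‖ ^ 2 / 2)) := by
  -- `e` regroups `((l, l'), (m, m'), (n, n'))` as `((l, m, n), (l', m', n'))`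
  let e := ((Equiv.refl (ℕ × ℕ)).prodCongr (Equiv.prodProdProdComm ℕ ℕ ℕ ℕ)).trans
    (Equiv.prodProdProdComm ℕ ℕ (ℕ × ℕ) (ℕ × ℕ))
  have hsum_norm := (summable_norm_gaussKernelTerm (y 0) (x 0)).mul_norm
    ((summable_norm_gaussKernelTerm (y 1) (x 1)).mul_norm
      (summable_norm_gaussKernelTerm (y 2) (x 2)))
  have hsum := (hasSum_gaussKernelTerm (y 0) (x 0)).mul
    ((hasSum_gaussKernelTerm (y 1) (x 1)).mul (hasSum_gaussKernelTerm (y 2) (x 2))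
      (summable_mul_of_summable_norm (summable_norm_gaussKernelTerm _ _)
        (summable_norm_gaussKernelTerm _ _))) hsum_norm.of_norm
  have hexp : Real.exp (-(y 0 - x 0) ^ 2 / 2) *
      (Real.exp (-(y 1 - x 1) ^ 2 / 2) * Real.exp (-(y 2 - x 2) ^ 2 / 2)) =
      Real.exp (-‖x - y‖ ^ 2 / 2) := by
    rw [EuclideanSpace.real_norm_sq_eq, ← Real.exp_add, ← Real.exp_add]
    simp only [Fin.sum_univ_three, PiLp.sub_apply]
    ring_nf
  refine ⟨e.summable_iff.1 <| hsum_norm.congr fun ⟨(l, l'), (m, m'), (n, n')⟩ => ?_,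
    e.hasSum_iff.1 <| hexp ▸ hsum.congr_fun fun ⟨(l, l'), (m, m'), (n, n')⟩ => ?_⟩
  · rw [Real.norm_eq_abs]
    exact congrArg abs (geomMoment_mul_He_eq_prod_gaussKernelTerm x y ..).symm
  · exact geomMoment_mul_He_eq_prod_gaussKernelTerm x y ..
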